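/- arXiv:1901.02122 — 7 statements merged into one kernel-verified Lean document; each statement's English description precedes it below -/
import Mathlib

section
/- Let S be a nonempty finite set and n a natural number. Let p and q be probability mass functions on (Fin n → S) × S whose marginals on the first coordinate agree, i.e., for every s̄ : Fin n → S, ∑_{s ∈ S} p(s̄, s) = ∑_{s ∈ S} q(s̄, s). Then there exists a probability mass function r on (Fin n → S) × S × S such that: (i) for all s̄ and s₁, ∑_{s₂ ∈ S} r(s̄, s₁, s₂) = p(s̄, s₁); (ii) for all s̄ and s₂, ∑_{s₁ ∈ S} r(s̄, s₁, s₂) = q(s̄, s₂); and (iii) ∑_{s̄} ∑_{s₁ ≠ s₂} r(s̄, s₁, s₂) ≤ (1/2) ∑_{s̄} ∑_{s ∈ S} |p(s̄, s) − q(s̄, s)|. (This is the bounded amalgamation property for finite stochastic processes: two processes agreeing on the tuple indexed by s̄ can be amalgamated with the two new points close together.) -/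
/-!
On each fibre `sb`, put the common mass `min (p (sb, s)) (q (sb, s))` on the diagonal and couple
the two excesses `(p - q)⁺` and `(q - p)⁺` independently. Equal fibre marginals make both excesses
have the same mass `d`, so the marginals come out right, and the off-diagonal mass is at most `d`,
which is half the fibre's `ℓ¹` distance.
-/

open scoped ENNReal
open Finset

section MaximalCoupling

variable {S : Type*} [Fintype S] {a b : S → ℝ≥0∞}

lemma ENNReal.sum_tsub_ne_top (ha : ∀ s, a s ≠ ∞) : ∑ s, (a s - b s) ≠ ∞ :=
  ENNReal.sum_ne_top.2 fun s _ => ne_top_of_le_ne_top (ha s) tsub_le_self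

lemma ENNReal.sum_tsub_eq_sum_tsub_of_sum_eq (ha : ∀ s, a s ≠ ∞) (hab : ∑ s, a s = ∑ s, b s) :
    ∑ s, (a s - b s) = ∑ s, (b s - a s) := by
  have hmin : ∑ s, min (a s) (b s) ≠ ∞ :=
    ENNReal.sum_ne_top.2 fun s _ => ne_top_of_le_ne_top (ha s) (min_le_left _ _)
  refine (ENNReal.add_left_inj hmin).1 ?_
  calc ∑ s, (a s - b s) + ∑ s, min (a s) (b s) = ∑ s, b s := by
        simp only [← sum_add_distrib, tsub_add_min, hab]
    _ = ∑ s, (b s - a s) + ∑ s, min (a s) (b s) := by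
        simp only [← sum_add_distrib, min_comm (a _), tsub_add_min]

lemma ENNReal.abs_toReal_sub_toReal {x y : ℝ≥0∞} (hx : x ≠ ∞) (hy : y ≠ ∞) :
    |x.toReal - y.toReal| = (x - y).toReal + (y - x).toReal := by
  rcases le_total x y with h | h
  · rw [tsub_eq_zero_of_le h, ENNReal.toReal_sub_of_le h hy, abs_sub_comm,
      abs_of_nonneg (sub_nonneg.2 (ENNReal.toReal_mono hy h))]
    simp
  · rw [tsub_eq_zero_of_le h, ENNReal.toReal_sub_of_le h hx,
      abs_of_nonneg (sub_nonneg.2 (ENNReal.toReal_mono hx h))]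
    simp

lemma ENNReal.sum_abs_toReal_sub_toReal (ha : ∀ s, a s ≠ ∞) (hb : ∀ s, b s ≠ ∞)
    (hab : ∑ s, a s = ∑ s, b s) :
    ∑ s, |(a s).toReal - (b s).toReal| = 2 * (∑ s, (a s - b s)).toReal := by
  rw [two_mul]
  nth_rw 2 [ENNReal.sum_tsub_eq_sum_tsub_of_sum_eq ha hab]
  rw [ENNReal.toReal_sum fun s _ => ne_top_of_le_ne_top (ha s) tsub_le_self,
    ENNReal.toReal_sum fun s _ => ne_top_of_le_ne_top (hb s) tsub_le_self, ← sum_add_distrib]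
  exact sum_congr rfl fun s _ => ENNReal.abs_toReal_sub_toReal (ha s) (hb s)

lemma ENNReal.mul_div_self_of_le {x d : ℝ≥0∞} (hx : x ≤ d) (hd : d ≠ ∞) : x * d / d = x := by
  rcases eq_or_ne d 0 with rfl | h0
  · simp [nonpos_iff_eq_zero.1 hx]
  · exact ENNReal.mul_div_cancel_right h0 hd

variable [DecidableEq S]

/-- A coupling of `a` and `b` (maximising the diagonal mass) only when they have the same finite
total mass. -/
noncomputable def maximalCoupling (a b : S → ℝ≥0∞) (s₁ s₂ : S) : ℝ≥0∞ :=
  (if s₁ = s₂ then min (a s₁) (b s₁) else 0) + (a s₁ - b s₁) * (b s₂ - a s₂) / ∑ s, (a s - b s)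

theorem sum_maximalCoupling_right (ha : ∀ s, a s ≠ ∞) (hab : ∑ s, a s = ∑ s, b s) (s₁ : S) :
    ∑ s₂, maximalCoupling a b s₁ s₂ = a s₁ := by
  have hle : a s₁ - b s₁ ≤ ∑ s, (a s - b s) :=
    single_le_sum (f := fun s => a s - b s) (fun _ _ => zero_le) (mem_univ s₁)
  simp only [maximalCoupling, sum_add_distrib, sum_ite_eq, mem_univ, if_true, div_eq_mul_inv,
    ← sum_mul, ← mul_sum, ← ENNReal.sum_tsub_eq_sum_tsub_of_sum_eq ha hab]
  rw [← div_eq_mul_inv, ENNReal.mul_div_self_of_le hle (ENNReal.sum_tsub_ne_top ha), add_comm,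
    tsub_add_min]

theorem sum_maximalCoupling_left (ha : ∀ s, a s ≠ ∞) (hab : ∑ s, a s = ∑ s, b s) (s₂ : S) :
    ∑ s₁, maximalCoupling a b s₁ s₂ = b s₂ := by
  have hle : b s₂ - a s₂ ≤ ∑ s, (a s - b s) := by
    rw [ENNReal.sum_tsub_eq_sum_tsub_of_sum_eq ha hab]
    exact single_le_sum (f := fun s => b s - a s) (fun _ _ => zero_le) (mem_univ s₂)
  simp only [maximalCoupling, sum_add_distrib, sum_ite_eq', mem_univ, if_true, div_eq_mul_inv,
    ← sum_mul]
  rw [mul_comm (∑ _, _), ← div_eq_mul_inv, ENNReal.mul_div_self_of_le hle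
    (ENNReal.sum_tsub_ne_top ha), add_comm, min_comm, tsub_add_min]

theorem sum_offDiag_maximalCoupling_le (ha : ∀ s, a s ≠ ∞) (hab : ∑ s, a s = ∑ s, b s) :
    ∑ s₁, ∑ s₂, (if s₁ ≠ s₂ then maximalCoupling a b s₁ s₂ else 0) ≤ ∑ s, (a s - b s) :=
  calc ∑ s₁, ∑ s₂, (if s₁ ≠ s₂ then maximalCoupling a b s₁ s₂ else 0)
      ≤ ∑ s₁, ∑ s₂, (a s₁ - b s₁) * (b s₂ - a s₂) / ∑ s, (a s - b s) := by
        gcongr with s₁ _ s₂ _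
        split_ifs with h
        · simp [maximalCoupling, h]
        · exact zero_le
    _ = ∑ s, (a s - b s) := by
        simp only [div_eq_mul_inv, ← sum_mul, ← mul_sum,
          ← ENNReal.sum_tsub_eq_sum_tsub_of_sum_eq ha hab]
        rw [← div_eq_mul_inv, ENNReal.mul_div_self_of_le le_rfl (ENNReal.sum_tsub_ne_top ha)]

theorem sum_offDiag_maximalCoupling_toReal_le (ha : ∀ s, a s ≠ ∞) (hb : ∀ s, b s ≠ ∞)
    (hab : ∑ s, a s = ∑ s, b s) :
    ∑ s₁, ∑ s₂, (if s₁ ≠ s₂ then (maximalCoupling a b s₁ s₂).toReal else 0)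
      ≤ (1 / 2) * ∑ s, |(a s).toReal - (b s).toReal| := by
  have hfin : ∀ s₁ s₂, maximalCoupling a b s₁ s₂ ≠ ∞ := fun s₁ s₂ =>
    ne_top_of_le_ne_top (ha s₁) <| sum_maximalCoupling_right ha hab s₁ ▸
      single_le_sum (f := maximalCoupling a b s₁) (fun _ _ => zero_le) (mem_univ s₂)
  have hite : ∀ s₁ s₂, (if s₁ ≠ s₂ then maximalCoupling a b s₁ s₂ else 0) ≠ ∞ := fun s₁ s₂ => by
    split_ifs <;> simp [hfin]
  calc ∑ s₁, ∑ s₂, (if s₁ ≠ s₂ then (maximalCoupling a b s₁ s₂).toReal else 0)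
      = (∑ s₁, ∑ s₂, if s₁ ≠ s₂ then maximalCoupling a b s₁ s₂ else 0).toReal := by
        rw [ENNReal.toReal_sum fun s₁ _ => ENNReal.sum_ne_top.2 fun s₂ _ => hite s₁ s₂]
        refine sum_congr rfl fun s₁ _ => ?_
        rw [ENNReal.toReal_sum fun s₂ _ => hite s₁ s₂]
        exact sum_congr rfl fun s₂ _ => by split_ifs <;> rfl
    _ ≤ (∑ s, (a s - b s)).toReal :=
        ENNReal.toReal_mono (ENNReal.sum_tsub_ne_top ha) (sum_offDiag_maximalCoupling_le ha hab)
    _ = (1 / 2) * ∑ s, |(a s).toReal - (b s).toReal| := by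
        rw [ENNReal.sum_abs_toReal_sub_toReal ha hb hab]
        ring

end MaximalCoupling

theorem stochastic_process_bounded_amalgamation_general
    {S : Type*} [Fintype S] [DecidableEq S] (n : ℕ)
    (p q : PMF ((Fin n → S) × S))
    (hmarg : ∀ sb : Fin n → S, ∑ s : S, p (sb, s) = ∑ s : S, q (sb, s)) :
    ∃ r : PMF ((Fin n → S) × S × S),
      (∀ (sb : Fin n → S) (s₁ : S), ∑ s₂ : S, r (sb, s₁, s₂) = p (sb, s₁)) ∧
      (∀ (sb : Fin n → S) (s₂ : S), ∑ s₁ : S, r (sb, s₁, s₂) = q (sb, s₂)) ∧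
      (∑ sb : Fin n → S, ∑ s₁ : S, ∑ s₂ : S,
          (if s₁ ≠ s₂ then (r (sb, s₁, s₂)).toReal else 0))
        ≤ (1 / 2) * ∑ sb : Fin n → S, ∑ s : S,
            |(p (sb, s)).toReal - (q (sb, s)).toReal| := by
  set r : (Fin n → S) × S × S → ℝ≥0∞ := fun x =>
    maximalCoupling (fun s => p (x.1, s)) (fun s => q (x.1, s)) x.2.1 x.2.2
  have hp : ∀ sb s, p (sb, s) ≠ ∞ := fun _ _ => p.apply_ne_top _
  have hq : ∀ sb s, q (sb, s) ≠ ∞ := fun _ _ => q.apply_ne_top _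
  have hr₁ : ∀ sb s₁, ∑ s₂, r (sb, s₁, s₂) = p (sb, s₁) := fun sb =>
    sum_maximalCoupling_right (hp sb) (hmarg sb)
  have hr : ∑ x, r x = 1 := calc
    ∑ x, r x = ∑ x, p x := by
        rw [Fintype.sum_prod_type, Fintype.sum_prod_type]
        refine sum_congr rfl fun sb _ => ?_
        rw [Fintype.sum_prod_type]
        exact sum_congr rfl fun s₁ _ => hr₁ sb s₁
    _ = 1 := by rw [← tsum_fintype (L := .unconditional _), p.tsum_coe]
  refine ⟨PMF.ofFintype r hr, hr₁, fun sb => sum_maximalCoupling_left (hp sb) (hmarg sb), ?_⟩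
  rw [mul_sum]
  exact sum_le_sum fun sb _ => sum_offDiag_maximalCoupling_toReal_le
    (a := fun s => p (sb, s)) (b := fun s => q (sb, s)) (hp sb) (hq sb) (hmarg sb)

/-- Bounded amalgamation for finite stochastic processes: if two probability mass functions
on `(Fin n → S) × S` have the same marginal on the first coordinate, they can be coupled by a
pmf on `(Fin n → S) × S × S` whose two marginals recover them, and in which the probability
that the two new coordinates differ is at most half the `ℓ¹` distance between the pmfs. -/
theorem stochastic_process_bounded_amalgamation
    {S : Type*} [Fintype S] [Nonempty S] [DecidableEq S] (n : ℕ)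
    (p q : PMF ((Fin n → S) × S))
    (hmarg : ∀ sb : Fin n → S, ∑ s : S, p (sb, s) = ∑ s : S, q (sb, s)) :
    ∃ r : PMF ((Fin n → S) × S × S),
      (∀ (sb : Fin n → S) (s₁ : S), ∑ s₂ : S, r (sb, s₁, s₂) = p (sb, s₁)) ∧
      (∀ (sb : Fin n → S) (s₂ : S), ∑ s₁ : S, r (sb, s₁, s₂) = q (sb, s₂)) ∧
      (∑ sb : Fin n → S, ∑ s₁ : S, ∑ s₂ : S,
          (if s₁ ≠ s₂ then (r (sb, s₁, s₂)).toReal else 0))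
        ≤ (1 / 2) * ∑ sb : Fin n → S, ∑ s : S,
            |(p (sb, s)).toReal - (q (sb, s)).toReal| :=
  stochastic_process_bounded_amalgamation_general n p q hmarg
end

section
/- Let X be a finite set, z₁ ≠ z₂ two points not in X, and let δ_B and δ_C be diversities on X ∪ {z₁} and X ∪ {z₂} respectively that agree on all subsets of X. Suppose δ is any diversity on X ∪ {z₁, z₂} whose restriction to X ∪ {z₁} is δ_B and whose restriction to X ∪ {z₂} is δ_C. Then for every A ⊆ X, δ(A ∪ {z₁, z₂}) ≥ max( max_{B ⊆ X} [δ_B(A ∪ B ∪ {z₁}) − δ_C(B ∪ {z₂})], max_{C ⊆ X} [δ_C(A ∪ C ∪ {z₂}) − δ_B(C ∪ {z₁})] ). That is, the one-point amalgamation formula gives the minimal possible values of any diversity extending both δ_B and δ_C. -/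
/-- Any diversity `δ` on `X ∪ {z₁, z₂}` extending two given diversities `δB` on `X ∪ {z₁}`
and `δC` on `X ∪ {z₂}` (which agree on subsets of `X`) must satisfy, for every `A ⊆ X`,
`δ(A ∪ {z₁,z₂}) ≥ δB(A ∪ B ∪ {z₁}) − δC(B ∪ {z₂})` for all `B ⊆ X` and
`δ(A ∪ {z₁,z₂}) ≥ δC(A ∪ C ∪ {z₂}) − δB(C ∪ {z₁})` for all `C ⊆ X`; i.e. the one-point
amalgamation formula gives the minimal possible values. -/
theorem amalgamation_is_minimal
    {α : Type*} [DecidableEq α] (X : Finset α) (z₁ z₂ : α)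
    (hz : z₁ ≠ z₂) (hz₁ : z₁ ∉ X) (hz₂ : z₂ ∉ X)
    (δB δC δ : Finset α → ℝ)
    -- δB is a diversity on X ∪ {z₁}
    (hB1 : ∀ A ⊆ insert z₁ X, 0 ≤ δB A)
    (hB0 : ∀ A ⊆ insert z₁ X, (δB A = 0 ↔ A.card ≤ 1))
    (hBtri : ∀ A B C : Finset α, A ⊆ insert z₁ X → B ⊆ insert z₁ X → C ⊆ insert z₁ X →
      B.Nonempty → δB (A ∪ C) ≤ δB (A ∪ B) + δB (B ∪ C))
    -- δC is a diversity on X ∪ {z₂}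
    (hC1 : ∀ A ⊆ insert z₂ X, 0 ≤ δC A)
    (hC0 : ∀ A ⊆ insert z₂ X, (δC A = 0 ↔ A.card ≤ 1))
    (hCtri : ∀ A B C : Finset α, A ⊆ insert z₂ X → B ⊆ insert z₂ X → C ⊆ insert z₂ X →
      B.Nonempty → δC (A ∪ C) ≤ δC (A ∪ B) + δC (B ∪ C))
    -- δB and δC agree on subsets of X
    (hagree : ∀ A ⊆ X, δB A = δC A)
    -- δ is a diversity on X ∪ {z₁, z₂}
    (hD1 : ∀ A ⊆ insert z₁ (insert z₂ X), 0 ≤ δ A)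
    (hD0 : ∀ A ⊆ insert z₁ (insert z₂ X), (δ A = 0 ↔ A.card ≤ 1))
    (hDtri : ∀ A B C : Finset α, A ⊆ insert z₁ (insert z₂ X) →
      B ⊆ insert z₁ (insert z₂ X) → C ⊆ insert z₁ (insert z₂ X) →
      B.Nonempty → δ (A ∪ C) ≤ δ (A ∪ B) + δ (B ∪ C))
    -- δ extends δB and δC
    (hres₁ : ∀ A ⊆ insert z₁ X, δ A = δB A)
    (hres₂ : ∀ A ⊆ insert z₂ X, δ A = δC A) :
    ∀ A ⊆ X,
      (∀ B ⊆ X, δB (A ∪ B ∪ {z₁}) - δC (B ∪ {z₂}) ≤ δ (A ∪ {z₁, z₂})) ∧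
      (∀ C ⊆ X, δC (A ∪ C ∪ {z₂}) - δB (C ∪ {z₁}) ≤ δ (A ∪ {z₁, z₂})) := by

  intro A hA
  have hsub : ∀ S ⊆ X, S ⊆ insert z₁ (insert z₂ X) := fun S hS =>
    hS.trans ((Finset.subset_insert _ _).trans (Finset.subset_insert _ _))
  constructor
  · intro B hB
    have key := hDtri (A ∪ {z₁}) {z₂} B
      (Finset.union_subset (hsub A hA) (by simp))
      (by simp) (hsub B hB) ⟨z₂, by simp⟩
    have e1 : A ∪ {z₁} ∪ B = A ∪ B ∪ {z₁} := by ext x; simp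
    have e2 : A ∪ {z₁} ∪ {z₂} = A ∪ {z₁, z₂} := by ext x; simp
    have e3 : ({z₂} : Finset α) ∪ B = B ∪ {z₂} := by ext x; simp
    rw [e1, e2, e3] at key
    have r1 : δ (A ∪ B ∪ {z₁}) = δB (A ∪ B ∪ {z₁}) := by
      apply hres₁
      intro x hx
      simp only [Finset.mem_union, Finset.mem_singleton] at hx
      rcases hx with (h | h) | h
      · exact Finset.mem_insert_of_mem (hA h)
      · exact Finset.mem_insert_of_mem (hB h)
      · simp [h]
    have r2 : δ (B ∪ {z₂}) = δC (B ∪ {z₂}) := by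
      apply hres₂
      intro x hx
      simp only [Finset.mem_union, Finset.mem_singleton] at hx
      rcases hx with h | h
      · exact Finset.mem_insert_of_mem (hB h)
      · simp [h]
    rw [r1, r2] at key
    linarith
  · intro C hC
    have key := hDtri (A ∪ {z₂}) {z₁} C
      (Finset.union_subset (hsub A hA) (by simp))
      (by simp) (hsub C hC) ⟨z₁, by simp⟩
    have e1 : A ∪ {z₂} ∪ C = A ∪ C ∪ {z₂} := by ext x; simp
    have e2 : A ∪ {z₂} ∪ {z₁} = A ∪ {z₁, z₂} := by ext x; simp; tauto
    have e3 : ({z₁} : Finset α) ∪ C = C ∪ {z₁} := by ext x; simp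
    rw [e1, e2, e3] at key
    have r1 : δ (A ∪ C ∪ {z₂}) = δC (A ∪ C ∪ {z₂}) := by
      apply hres₂
      intro x hx
      simp only [Finset.mem_union, Finset.mem_singleton] at hx
      rcases hx with (h | h) | h
      · exact Finset.mem_insert_of_mem (hA h)
      · exact Finset.mem_insert_of_mem (hC h)
      · simp [h]
    have r2 : δ (C ∪ {z₁}) = δB (C ∪ {z₁}) := by
      apply hres₁
      intro x hx
      simp only [Finset.mem_union, Finset.mem_singleton] at hx
      rcases hx with h | h
      · exact Finset.mem_insert_of_mem (hC h)
      · simp [h]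
    rw [r1, r2] at key
    linarith
end

section
/- Let X be a finite set, z₁ ≠ z₂ two points not in X, and let δ_B and δ_C be diversities on X ∪ {z₁} and X ∪ {z₂} respectively that agree on all subsets of X. Let δ_D be the one-point amalgamation, defined for A ⊆ X by δ_D(A ∪ {z₁, z₂}) = max( max_{B ⊆ X} [δ_B(A ∪ B ∪ {z₁}) − δ_C(B ∪ {z₂})], max_{C ⊆ X} [δ_C(A ∪ C ∪ {z₂}) − δ_B(C ∪ {z₁})] ), extending δ_B and δ_C. Then the distance between the two amalgamated points satisfies δ_D({z₁, z₂}) = max_{A ⊆ X} |δ_B(A ∪ {z₁}) − δ_C(A ∪ {z₂})|. In particular δ_D({z₁, z₂}) ≤ max over all subsets A ⊆ X of the difference of the two diversities on corresponding sets (the bounded amalgamation property with constant 1). -/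
/-- The one-point amalgamation of two diversities `δB` on `X ∪ {z₁}` and `δC` on `X ∪ {z₂}`:
sets avoiding `z₂` get value `δB`, sets avoiding `z₁` get value `δC`, and a set
`E = A ∪ {z₁, z₂}` (with `A ⊆ X`) gets
`max (max_{B ⊆ X} δB(A ∪ B ∪ {z₁}) − δC(B ∪ {z₂})) (max_{C ⊆ X} δC(A ∪ C ∪ {z₂}) − δB(C ∪ {z₁}))`. -/
noncomputable def amalg {α : Type*} [DecidableEq α] (X : Finset α) (z₁ z₂ : α)
    (δB δC : Finset α → ℝ) (E : Finset α) : ℝ :=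
  if z₂ ∉ E then δB E
  else if z₁ ∉ E then δC E
  else
    max
      (X.powerset.sup' (Finset.powerset_nonempty X) fun B =>
        δB ((E \ {z₁, z₂}) ∪ B ∪ {z₁}) - δC (B ∪ {z₂}))
      (X.powerset.sup' (Finset.powerset_nonempty X) fun C =>
        δC ((E \ {z₁, z₂}) ∪ C ∪ {z₂}) - δB (C ∪ {z₁}))

/-- In the one-point amalgamation, the distance between the two amalgamated points is
exactly `max_{A ⊆ X} |δB(A ∪ {z₁}) − δC(A ∪ {z₂})|` (the bounded amalgamation property
for diversities, with constant 1). -/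
theorem amalg_distance_eq_sup_difference
    {α : Type*} [DecidableEq α] (X : Finset α) (z₁ z₂ : α)
    (hz : z₁ ≠ z₂) (hz₁ : z₁ ∉ X) (hz₂ : z₂ ∉ X)
    (δB δC : Finset α → ℝ)
    -- δB is a diversity on X ∪ {z₁}
    (hB1 : ∀ A ⊆ insert z₁ X, 0 ≤ δB A)
    (hB0 : ∀ A ⊆ insert z₁ X, (δB A = 0 ↔ A.card ≤ 1))
    (hBtri : ∀ A B C : Finset α, A ⊆ insert z₁ X → B ⊆ insert z₁ X → C ⊆ insert z₁ X →
      B.Nonempty → δB (A ∪ C) ≤ δB (A ∪ B) + δB (B ∪ C))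
    -- δC is a diversity on X ∪ {z₂}
    (hC1 : ∀ A ⊆ insert z₂ X, 0 ≤ δC A)
    (hC0 : ∀ A ⊆ insert z₂ X, (δC A = 0 ↔ A.card ≤ 1))
    (hCtri : ∀ A B C : Finset α, A ⊆ insert z₂ X → B ⊆ insert z₂ X → C ⊆ insert z₂ X →
      B.Nonempty → δC (A ∪ C) ≤ δC (A ∪ B) + δC (B ∪ C))
    -- δB and δC agree on subsets of X
    (hagree : ∀ A ⊆ X, δB A = δC A) :
    amalg X z₁ z₂ δB δC {z₁, z₂}
      = X.powerset.sup' (Finset.powerset_nonempty X)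
          (fun A => |δB (A ∪ {z₁}) - δC (A ∪ {z₂})|) := by
  have h1 : z₁ ∈ ({z₁, z₂} : Finset α) := by simp
  have h2 : z₂ ∈ ({z₁, z₂} : Finset α) := by simp
  have hempty : ({z₁, z₂} : Finset α) \ {z₁, z₂} = ∅ := Finset.sdiff_self _
  rw [amalg, if_neg (by simpa using h2), if_neg (by simpa using h1), hempty]
  simp only [Finset.empty_union]
  apply le_antisymm
  · apply max_le
    · apply Finset.sup'_le
      intro B hB
      exact le_trans (le_abs_self _) (Finset.le_sup' (fun A => |δB (A ∪ {z₁}) - δC (A ∪ {z₂})|) hB)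
    · apply Finset.sup'_le
      intro B hB
      calc δC (B ∪ {z₂}) - δB (B ∪ {z₁}) = -(δB (B ∪ {z₁}) - δC (B ∪ {z₂})) := by ring
        _ ≤ |δB (B ∪ {z₁}) - δC (B ∪ {z₂})| := neg_le_abs _
        _ ≤ _ := Finset.le_sup' (fun A => |δB (A ∪ {z₁}) - δC (A ∪ {z₂})|) hB
  · apply Finset.sup'_le
    intro A hA
    rcases abs_sub_le_iff.mp (le_refl |δB (A ∪ {z₁}) - δC (A ∪ {z₂})|) with ⟨ha, hb⟩
    rcases abs_cases (δB (A ∪ {z₁}) - δC (A ∪ {z₂})) with ⟨h, _⟩ | ⟨h, _⟩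
    · rw [h]
      exact le_max_of_le_left (Finset.le_sup' (fun x => δB (x ∪ {z₁}) - δC (x ∪ {z₂})) hA)
    · rw [h]
      refine le_max_of_le_right ?_
      calc -(δB (A ∪ {z₁}) - δC (A ∪ {z₂})) = δC (A ∪ {z₂}) - δB (A ∪ {z₁}) := by ring
        _ ≤ _ := Finset.le_sup' (fun x => δC (x ∪ {z₂}) - δB (x ∪ {z₁})) hA
end

section
/- Let (X, δ_X) and (Y, δ_Y) be diversities on disjoint sets, and let k > 0 be a real number such that δ_X(A) ≤ k for all finite A ⊆ X and δ_Y(B) ≤ k for all finite B ⊆ Y. Define δ_Z on finite subsets of the disjoint union Z = X ⊔ Y by: δ_Z(C) = δ_X(C) if C ⊆ X; δ_Z(C) = δ_Y(C) if C ⊆ Y; and δ_Z(C) = k if C intersects both X and Y. Then (Z, δ_Z) is a diversity, and both (X, δ_X) and (Y, δ_Y) embed into it (joint embedding property for diversities). -/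
lemma eq_image_inl_of_toRight_eq {X Y : Type*} [DecidableEq X] [DecidableEq Y]
    {C : Finset (X ⊕ Y)} (h : C.toRight = ∅) : C = C.toLeft.image Sum.inl := by
  ext z
  cases z with
  | inl x => simp
  | inr y =>
    simp only [Finset.mem_image, Finset.mem_toLeft, reduceCtorEq, and_false, exists_false,
      iff_false]
    intro hy
    have : y ∈ C.toRight := Finset.mem_toRight.mpr hy
    simp [h] at this

lemma eq_image_inr_of_toLeft_eq {X Y : Type*} [DecidableEq X] [DecidableEq Y]
    {C : Finset (X ⊕ Y)} (h : C.toLeft = ∅) : C = C.toRight.image Sum.inr := by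
  ext z
  cases z with
  | inr y => simp
  | inl x =>
    simp only [Finset.mem_image, Finset.mem_toLeft, reduceCtorEq, and_false, exists_false,
      iff_false]
    intro hx
    have : x ∈ C.toLeft := Finset.mem_toLeft.mpr hx
    simp [h] at this

/-- Joint embedding property for diversities: given diversities `(X, δX)` and `(Y, δY)`
bounded above by `k > 0`, the function on finite subsets of the disjoint union `X ⊕ Y`
which restricts to `δX` on (copies of) subsets of `X`, to `δY` on subsets of `Y`, and
takes the value `k` on sets meeting both sides, is a diversity into which both `(X, δX)`
and `(Y, δY)` embed. -/
theorem diversity_joint_embedding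
    {X Y : Type*} [DecidableEq X] [DecidableEq Y]
    (δX : Finset X → ℝ) (δY : Finset Y → ℝ) (k : ℝ) (hk : 0 < k)
    -- δX is a diversity bounded by k
    (hX1 : ∀ A : Finset X, 0 ≤ δX A)
    (hX0 : ∀ A : Finset X, δX A = 0 ↔ A.card ≤ 1)
    (hXtri : ∀ A B C : Finset X, B.Nonempty → δX (A ∪ C) ≤ δX (A ∪ B) + δX (B ∪ C))
    (hXbd : ∀ A : Finset X, δX A ≤ k)
    -- δY is a diversity bounded by k
    (hY1 : ∀ B : Finset Y, 0 ≤ δY B)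
    (hY0 : ∀ B : Finset Y, δY B = 0 ↔ B.card ≤ 1)
    (hYtri : ∀ A B C : Finset Y, B.Nonempty → δY (A ∪ C) ≤ δY (A ∪ B) + δY (B ∪ C))
    (hYbd : ∀ B : Finset Y, δY B ≤ k)
    -- δZ is defined on the disjoint union as described
    (δZ : Finset (X ⊕ Y) → ℝ)
    (hZX : ∀ C : Finset X, δZ (C.image Sum.inl) = δX C)
    (hZY : ∀ C : Finset Y, δZ (C.image Sum.inr) = δY C)
    (hZmix : ∀ C : Finset (X ⊕ Y), (∃ x, Sum.inl x ∈ C) → (∃ y, Sum.inr y ∈ C) → δZ C = k) :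
    -- then δZ is a diversity (and hZX, hZY witness the embeddings of δX and δY into it)
    (∀ C : Finset (X ⊕ Y), 0 ≤ δZ C) ∧
    (∀ C : Finset (X ⊕ Y), δZ C = 0 ↔ C.card ≤ 1) ∧
    (∀ A B C : Finset (X ⊕ Y), B.Nonempty → δZ (A ∪ C) ≤ δZ (A ∪ B) + δZ (B ∪ C)) := by
  have hleft : ∀ S : Finset (X ⊕ Y), S.toRight = ∅ → δZ S = δX S.toLeft := by
    intro S h
    conv_lhs => rw [eq_image_inl_of_toRight_eq h]
    exact hZX _
  have hright : ∀ S : Finset (X ⊕ Y), S.toLeft = ∅ → δZ S = δY S.toRight := by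
    intro S h
    conv_lhs => rw [eq_image_inr_of_toLeft_eq h]
    exact hZY _
  have hmix : ∀ S : Finset (X ⊕ Y), S.toLeft.Nonempty → S.toRight.Nonempty → δZ S = k := by
    intro S ⟨x, hx⟩ ⟨y, hy⟩
    exact hZmix S ⟨x, Finset.mem_toLeft.mp hx⟩ ⟨y, Finset.mem_toRight.mp hy⟩
  have key : ∀ S : Finset (X ⊕ Y),
      (S.toRight = ∅ ∧ δZ S = δX S.toLeft) ∨ (S.toLeft = ∅ ∧ δZ S = δY S.toRight) ∨
      (S.toLeft.Nonempty ∧ S.toRight.Nonempty ∧ δZ S = k) := by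
    intro S
    rcases Finset.eq_empty_or_nonempty S.toRight with h | hR
    · exact Or.inl ⟨h, hleft S h⟩
    rcases Finset.eq_empty_or_nonempty S.toLeft with h | hL
    · exact Or.inr (Or.inl ⟨h, hright S h⟩)
    · exact Or.inr (Or.inr ⟨hL, hR, hmix S hL hR⟩)
  have hnn : ∀ S : Finset (X ⊕ Y), 0 ≤ δZ S := by
    intro S
    rcases key S with ⟨_, e⟩ | ⟨_, e⟩ | ⟨_, _, e⟩
    · rw [e]; exact hX1 _
    · rw [e]; exact hY1 _
    · rw [e]; exact hk.le
  have hbd : ∀ S : Finset (X ⊕ Y), δZ S ≤ k := by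
    intro S
    rcases key S with ⟨_, e⟩ | ⟨_, e⟩ | ⟨_, _, e⟩
    · rw [e]; exact hXbd _
    · rw [e]; exact hYbd _
    · rw [e]
  refine ⟨hnn, ?_, ?_⟩
  · intro S
    have hcard := S.card_toLeft_add_card_toRight
    rcases key S with ⟨h, e⟩ | ⟨h, e⟩ | ⟨hL, hR, e⟩
    · rw [e, hX0]
      rw [h] at hcard
      simp at hcard
      omega
    · rw [e, hY0]
      rw [h] at hcard
      simp at hcard
      omega
    · rw [e]
      have h1 : 1 ≤ S.toLeft.card := Finset.card_pos.mpr hL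
      have h2 : 1 ≤ S.toRight.card := Finset.card_pos.mpr hR
      constructor
      · intro h0; exact absurd h0 hk.ne'
      · intro hc; omega
  · intro A B C hB
    have hAC := hbd (A ∪ C)
    have h1 := hnn (A ∪ B)
    have h2 := hnn (B ∪ C)
    rcases key B with ⟨hBr, _⟩ | ⟨hBl, _⟩ | ⟨hBL, hBR, _⟩
    · -- B pure left
      have hBL : B.toLeft.Nonempty := by
        obtain ⟨b, hb⟩ := hB
        cases b with
        | inl x => exact ⟨x, Finset.mem_toLeft.mpr hb⟩
        | inr y =>
          exact absurd (hBr ▸ Finset.mem_toRight.mpr hb) (Finset.notMem_empty y)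
      rcases Finset.eq_empty_or_nonempty A.toRight with hA | hA
      · rcases Finset.eq_empty_or_nonempty C.toRight with hC | hC
        · -- all pure left
          rw [hleft (A ∪ C) (by rw [Finset.toRight_union, hA, hC]; simp),
              hleft (A ∪ B) (by rw [Finset.toRight_union, hA, hBr]; simp),
              hleft (B ∪ C) (by rw [Finset.toRight_union, hBr, hC]; simp),
              Finset.toLeft_union, Finset.toLeft_union, Finset.toLeft_union]
          exact hXtri _ _ _ hBL
        · -- C has a right element, B∪C mixed
          have : δZ (B ∪ C) = k :=
            hmix _ (hBL.mono (Finset.toLeft_subset_toLeft Finset.subset_union_left))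
              (hC.mono (Finset.toRight_subset_toRight Finset.subset_union_right))
          linarith
      · -- A has a right element, A∪B mixed
        have : δZ (A ∪ B) = k :=
          hmix _ (hBL.mono (Finset.toLeft_subset_toLeft Finset.subset_union_right))
            (hA.mono (Finset.toRight_subset_toRight Finset.subset_union_left))
        linarith
    · -- B pure right
      have hBR : B.toRight.Nonempty := by
        obtain ⟨b, hb⟩ := hB
        cases b with
        | inr y => exact ⟨y, Finset.mem_toRight.mpr hb⟩
        | inl x =>
          exact absurd (hBl ▸ Finset.mem_toLeft.mpr hb) (Finset.notMem_empty x)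
      rcases Finset.eq_empty_or_nonempty A.toLeft with hA | hA
      · rcases Finset.eq_empty_or_nonempty C.toLeft with hC | hC
        · -- all pure right
          rw [hright (A ∪ C) (by rw [Finset.toLeft_union, hA, hC]; simp),
              hright (A ∪ B) (by rw [Finset.toLeft_union, hA, hBl]; simp),
              hright (B ∪ C) (by rw [Finset.toLeft_union, hBl, hC]; simp),
              Finset.toRight_union, Finset.toRight_union, Finset.toRight_union]
          exact hYtri _ _ _ hBR
        · have : δZ (B ∪ C) = k :=
            hmix _ (hC.mono (Finset.toLeft_subset_toLeft Finset.subset_union_right))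
              (hBR.mono (Finset.toRight_subset_toRight Finset.subset_union_left))
          linarith
      · have : δZ (A ∪ B) = k :=
          hmix _ (hA.mono (Finset.toLeft_subset_toLeft Finset.subset_union_left))
            (hBR.mono (Finset.toRight_subset_toRight Finset.subset_union_right))
        linarith
    · -- B mixed
      have : δZ (A ∪ B) = k :=
        hmix _ (hBL.mono (Finset.toLeft_subset_toLeft Finset.subset_union_right))
          (hBR.mono (Finset.toRight_subset_toRight Finset.subset_union_right))
      linarith
end

section
/- Let (Y, δ) be a diversity, n a natural number, and a, b : Fin n → Y two n-tuples of points of Y. Then for every subset S ⊆ Fin n, |δ({a(i) : i ∈ S}) − δ({b(i) : i ∈ S})| ≤ ∑_{i ∈ S} δ({a(i), b(i)}). In particular it is at most n · max_i d(a(i), b(i)), where d is the induced metric. -/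
/-- For a diversity `δ` and two `n`-tuples `a, b` of points, the diversity of corresponding
sub-tuples differs by at most the sum (hence at most `n` times the maximum) of the induced
distances `δ {a i, b i}`. -/
theorem diversity_tuple_difference_bound
    {Y : Type*} [DecidableEq Y] (δ : Finset Y → ℝ)
    (h1 : ∀ A : Finset Y, 0 ≤ δ A)
    (h0 : ∀ A : Finset Y, δ A = 0 ↔ A.card ≤ 1)
    (htri : ∀ A B C : Finset Y, B.Nonempty → δ (A ∪ C) ≤ δ (A ∪ B) + δ (B ∪ C))
    (n : ℕ) (a b : Fin n → Y) :
    ∀ S : Finset (Fin n),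
      |δ (S.image a) - δ (S.image b)| ≤ ∑ i ∈ S, δ {a i, b i} ∧
      |δ (S.image a) - δ (S.image b)| ≤ (n : ℝ) * ⨆ i, δ {a i, b i} := by
  -- Key lemma: replacing the `a`-image by the `b`-image costs at most the sum of pair
  -- diversities, uniformly in an auxiliary set `T`.
  have key : ∀ a b : Fin n → Y, ∀ S : Finset (Fin n), ∀ T : Finset Y,
      δ (S.image a ∪ T) ≤ δ (S.image b ∪ T) + ∑ i ∈ S, δ {a i, b i} := by
    intro a b S
    induction S using Finset.induction_on with
    | empty => simp
    | @insert i S hi ih =>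
      intro T
      have e1 : ((insert i S).image a ∪ T) = S.image a ∪ insert (a i) T := by
        simp [Finset.image_insert, Finset.insert_union, Finset.union_insert]
      have e2 : ((insert i S).image b ∪ T) = S.image b ∪ insert (b i) T := by
        simp [Finset.image_insert, Finset.insert_union, Finset.union_insert]
      have swap : δ (S.image b ∪ insert (a i) T) ≤
          δ {a i, b i} + δ (S.image b ∪ insert (b i) T) := by
        have h := htri {a i} {b i} (S.image b ∪ T) ⟨b i, by simp⟩
        have ea : {a i} ∪ (S.image b ∪ T) = S.image b ∪ insert (a i) T := by
          ext x; simp [or_comm, or_left_comm]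
        have eb : {b i} ∪ (S.image b ∪ T) = S.image b ∪ insert (b i) T := by
          ext x; simp [or_comm, or_left_comm]
        have ep : ({a i} : Finset Y) ∪ {b i} = {a i, b i} := by
          ext x; simp
        rw [ea, eb, ep] at h
        exact h
      rw [e1, e2, Finset.sum_insert hi]
      calc δ (S.image a ∪ insert (a i) T)
          ≤ δ (S.image b ∪ insert (a i) T) + ∑ j ∈ S, δ {a j, b j} := ih _
        _ ≤ (δ {a i, b i} + δ (S.image b ∪ insert (b i) T)) + ∑ j ∈ S, δ {a j, b j} := by
            linarith
        _ = δ (S.image b ∪ insert (b i) T) + (δ {a i, b i} + ∑ j ∈ S, δ {a j, b j}) := by ring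
  intro S
  have hk1 := key a b S ∅
  have hk2 := key b a S ∅
  simp only [Finset.union_empty] at hk1 hk2
  have hpair : ∀ i, ({b i, a i} : Finset Y) = {a i, b i} := fun i => Finset.pair_comm _ _
  have hk2' : δ (S.image b) ≤ δ (S.image a) + ∑ i ∈ S, δ {a i, b i} := by
    calc δ (S.image b) ≤ δ (S.image a) + ∑ i ∈ S, δ {b i, a i} := hk2
      _ = δ (S.image a) + ∑ i ∈ S, δ {a i, b i} := by
          congr 1; exact Finset.sum_congr rfl fun i _ => by rw [hpair i]
  have habs : |δ (S.image a) - δ (S.image b)| ≤ ∑ i ∈ S, δ {a i, b i} := by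
    rw [abs_sub_le_iff]; constructor <;> linarith
  refine ⟨habs, le_trans habs ?_⟩
  by_cases hn : n = 0
  · subst hn
    have : S = ∅ := Finset.eq_empty_of_isEmpty S
    subst this
    simp
  · have hbdd : BddAbove (Set.range fun i => δ {a i, b i}) := (Set.finite_range _).bddAbove
    have hex : Nonempty (Fin n) := ⟨⟨0, Nat.pos_of_ne_zero hn⟩⟩
    have hM0 : 0 ≤ ⨆ i, δ {a i, b i} :=
      le_trans (h1 {a hex.some, b hex.some}) (le_ciSup hbdd hex.some)
    calc ∑ i ∈ S, δ {a i, b i} ≤ ∑ _i ∈ S, ⨆ j, δ {a j, b j} :=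
          Finset.sum_le_sum fun i _ => le_ciSup hbdd i
      _ = (S.card : ℝ) * ⨆ j, δ {a j, b j} := by rw [Finset.sum_const, nsmul_eq_mul]
      _ ≤ (n : ℝ) * ⨆ j, δ {a j, b j} := by
          apply mul_le_mul_of_nonneg_right _ hM0
          exact_mod_cast le_trans (Finset.card_le_univ S) (le_of_eq (Finset.card_fin n))
end

section
/- Let n be a natural number, ε ≥ 0, and let δ_a and δ_b be diversities on the finite set {1, …, n} (viewed as Fin n) such that |δ_a(A) − δ_b(A)| ≤ ε for every subset A ⊆ Fin n. Then there exists a semidiversity δ on the disjoint union Fin n ⊔ Fin n whose restriction to the left copy equals δ_a, whose restriction to the right copy equals δ_b, and such that δ({inl(i), inr(i)}) ≤ ε for every i ∈ Fin n. That is, two finite enumerated diversities at sup-distance ε admit a joint embedding matching corresponding points to within ε. -/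
namespace JointDiv

variable {n : ℕ}

/-- Rooted connected cover structures over the generators
`inl A` (value `δa A`), `inr B` (value `δb B`) and links `{inl i, inr i}` (value `ε`).
`Cov ε δa δb b P Q v` means: there is a connected cover structure with left shadow `P`,
right shadow `Q`, total value `v`, rooted on the `a`-side (`b = true`) or `b`-side. -/
inductive Cov (ε : ℝ) (δa δb : Finset (Fin n) → ℝ) :
    Bool → Finset (Fin n) → Finset (Fin n) → ℝ → Prop
  | basea (A : Finset (Fin n)) : Cov ε δa δb true A ∅ (δa A)
  | baseb (B : Finset (Fin n)) : Cov ε δa δb false ∅ B (δb B)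
  | link (i : Fin n) (b : Bool) : Cov ε δa δb b {i} {i} ε
  | attachA {P Q v P' Q' v' : _} (j : Fin n) :
      Cov ε δa δb true P Q v → Cov ε δa δb true P' Q' v' → j ∈ P → j ∈ P' →
      Cov ε δa δb true (P ∪ P') (Q ∪ Q') (v + v')
  | attachB {P Q v P' Q' v' : _} (q : Fin n) :
      Cov ε δa δb false P Q v → Cov ε δa δb false P' Q' v' → q ∈ Q → q ∈ Q' →
      Cov ε δa δb false (P ∪ P') (Q ∪ Q') (v + v')
  | linkb {P Q v : _} (i : Fin n) :
      Cov ε δa δb false P Q v → i ∈ Q → Cov ε δa δb true (P ∪ {i}) (Q ∪ {i}) (v + ε)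
  | linka {P Q v : _} (i : Fin n) :
      Cov ε δa δb true P Q v → i ∈ P → Cov ε δa δb false (P ∪ {i}) (Q ∪ {i}) (v + ε)

variable {ε : ℝ} {δa δb : Finset (Fin n) → ℝ}

lemma covCast {b P Q v P' Q' v'} (h : Cov ε δa δb b P Q v)
    (hP : P = P') (hQ : Q = Q') (hv : v = v') : Cov ε δa δb b P' Q' v' := by
  subst hP; subst hQ; subst hv; exact h

/-- Monotonicity of a diversity-like function. -/
lemma mono (δ : Finset (Fin n) → ℝ) (h1 : ∀ x : Fin n, δ {x} = 0)
    (htri : ∀ A B C : Finset (Fin n), B.Nonempty → δ (A ∪ C) ≤ δ (A ∪ B) + δ (B ∪ C))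
    {S T : Finset (Fin n)} (hST : S ⊆ T) : δ S ≤ δ T := by
  have step : ∀ (U : Finset (Fin n)) (x : Fin n), δ U ≤ δ (insert x U) := by
    intro U x
    have h := htri U {x} ∅ ⟨x, Finset.mem_singleton_self x⟩
    rw [Finset.union_empty, Finset.union_empty, h1 x] at h
    rw [Finset.union_comm, ← Finset.insert_eq] at h
    linarith
  have main : ∀ (U S : Finset (Fin n)), δ S ≤ δ (S ∪ U) := by
    intro U
    induction U using Finset.induction_on with
    | empty => intro S; simp
    | @insert x U hx IH =>
      intro S
      have h2 := step (S ∪ U) x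
      rw [Finset.union_insert]
      exact le_trans (IH S) h2
  calc δ S ≤ δ (S ∪ T) := main T S
    _ = δ T := by rw [Finset.union_eq_right.mpr hST]

lemma cov_nonneg (hε : 0 ≤ ε) (ha1 : ∀ A, 0 ≤ δa A) (hb1 : ∀ A, 0 ≤ δb A)
    {b P Q v} (h : Cov ε δa δb b P Q v) : 0 ≤ v := by
  induction h with
  | basea A => exact ha1 A
  | baseb B => exact hb1 B
  | link i b => exact hε
  | attachA j h1 h2 hj1 hj2 IH1 IH2 => linarith
  | attachB q h1 h2 hq1 hq2 IH1 IH2 => linarith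
  | linkb i h1 hi IH => linarith
  | linka i h1 hi IH => linarith

/-- The key lower bound: a rooted cover structure's value dominates the appropriate
diversity of its total shadow. -/
lemma cov_bound (hε : 0 ≤ ε)
    (ha0s : ∀ i : Fin n, δa {i} = 0) (hb0s : ∀ i : Fin n, δb {i} = 0)
    (hatri : ∀ A B C : Finset (Fin n), B.Nonempty → δa (A ∪ C) ≤ δa (A ∪ B) + δa (B ∪ C))
    (hbtri : ∀ A B C : Finset (Fin n), B.Nonempty → δb (A ∪ C) ≤ δb (A ∪ B) + δb (B ∪ C))
    (hab : ∀ T, δa T ≤ δb T + ε) (hba : ∀ T, δb T ≤ δa T + ε)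
    {b P Q v} (h : Cov ε δa δb b P Q v) :
    (b = true → δa (P ∪ Q) ≤ v) ∧ (b = false → δb (P ∪ Q) ≤ v) := by
  induction h with
  | basea A =>
    refine ⟨fun _ => ?_, fun hb => by simp at hb⟩
    rw [Finset.union_empty]
  | baseb B =>
    refine ⟨fun hb => by simp at hb, fun _ => ?_⟩
    rw [Finset.empty_union]
  | link i b =>
    constructor
    · intro _
      rw [Finset.union_self]
      rw [ha0s i]; exact hε
    · intro _
      rw [Finset.union_self]
      rw [hb0s i]; exact hε
  | attachA j h1 h2 hj1 hj2 IH1 IH2 =>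
    rename_i P1 Q1 v1 P2 Q2 v2
    refine ⟨fun _ => ?_, fun hb => by simp at hb⟩
    have e1 : (P1 ∪ P2) ∪ (Q1 ∪ Q2) = (P1 ∪ Q1) ∪ (P2 ∪ Q2) :=
      Finset.union_union_union_comm P1 P2 Q1 Q2
    have h3 := hatri (P1 ∪ Q1) {j} (P2 ∪ Q2) ⟨j, Finset.mem_singleton_self j⟩
    have e2 : (P1 ∪ Q1) ∪ {j} = P1 ∪ Q1 :=
      Finset.union_eq_left.mpr
        (Finset.singleton_subset_iff.mpr (Finset.mem_union_left _ hj1))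
    have e3 : ({j} : Finset (Fin n)) ∪ (P2 ∪ Q2) = P2 ∪ Q2 :=
      Finset.union_eq_right.mpr
        (Finset.singleton_subset_iff.mpr (Finset.mem_union_left _ hj2))
    rw [e2, e3] at h3
    rw [e1]
    linarith [IH1.1 rfl, IH2.1 rfl]
  | attachB q h1 h2 hq1 hq2 IH1 IH2 =>
    rename_i P1 Q1 v1 P2 Q2 v2
    refine ⟨fun hb => by simp at hb, fun _ => ?_⟩
    have e1 : (P1 ∪ P2) ∪ (Q1 ∪ Q2) = (P1 ∪ Q1) ∪ (P2 ∪ Q2) :=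
      Finset.union_union_union_comm P1 P2 Q1 Q2
    have h3 := hbtri (P1 ∪ Q1) {q} (P2 ∪ Q2) ⟨q, Finset.mem_singleton_self q⟩
    have e2 : (P1 ∪ Q1) ∪ {q} = P1 ∪ Q1 :=
      Finset.union_eq_left.mpr
        (Finset.singleton_subset_iff.mpr (Finset.mem_union_right _ hq1))
    have e3 : ({q} : Finset (Fin n)) ∪ (P2 ∪ Q2) = P2 ∪ Q2 :=
      Finset.union_eq_right.mpr
        (Finset.singleton_subset_iff.mpr (Finset.mem_union_right _ hq2))
    rw [e2, e3] at h3
    rw [e1]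
    linarith [IH1.2 rfl, IH2.2 rfl]
  | linkb i h1 hi IH =>
    rename_i P1 Q1 v1
    refine ⟨fun _ => ?_, fun hb => by simp at hb⟩
    have e : (P1 ∪ {i}) ∪ (Q1 ∪ {i}) = P1 ∪ Q1 := by
      ext a
      simp only [Finset.mem_union, Finset.mem_singleton]
      constructor
      · rintro ((h | rfl) | (h | rfl))
        · exact Or.inl h
        · exact Or.inr hi
        · exact Or.inr h
        · exact Or.inr hi
      · rintro (h | h)
        · exact Or.inl (Or.inl h)
        · exact Or.inr (Or.inl h)
    rw [e]
    have := IH.2 rfl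
    linarith [hab (P1 ∪ Q1)]
  | linka i h1 hi IH =>
    rename_i P1 Q1 v1
    refine ⟨fun hb => by simp at hb, fun _ => ?_⟩
    have e : (P1 ∪ {i}) ∪ (Q1 ∪ {i}) = P1 ∪ Q1 := by
      ext a
      simp only [Finset.mem_union, Finset.mem_singleton]
      constructor
      · rintro ((h | rfl) | (h | rfl))
        · exact Or.inl h
        · exact Or.inl hi
        · exact Or.inr h
        · exact Or.inl hi
      · rintro (h | h)
        · exact Or.inl (Or.inl h)
        · exact Or.inr (Or.inl h)
    rw [e]
    have := IH.1 rfl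
    linarith [hba (P1 ∪ Q1)]

/-- Merging a `b`-side structure into an `a`-rooted structure at a shared right-shadow point. -/
lemma Mb {b P Q v} (hc : Cov ε δa δb b P Q v) :
    b = true → ∀ P' Q' v' (q : Fin n), Cov ε δa δb false P' Q' v' → q ∈ Q → q ∈ Q' →
      Cov ε δa δb true (P ∪ P') (Q ∪ Q') (v + v') := by
  induction hc with
  | basea A =>
    intro _ P' Q' v' q cb hq hq'
    exact absurd hq (Finset.notMem_empty q)
  | baseb B => intro hb; simp at hb
  | link i b =>
    intro _ P' Q' v' q cb hq hq'
    have hqi : q = i := Finset.mem_singleton.mp hq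
    subst hqi
    exact covCast (Cov.linkb q cb hq') (Finset.union_comm _ _) (Finset.union_comm _ _)
      (add_comm _ _)
  | attachA j h1 h2 hj1 hj2 IH1 IH2 =>
    rename_i P1 Q1 v1 P2 Q2 v2
    intro _ P' Q' v' q cb hq hq'
    rcases Finset.mem_union.mp hq with hq1 | hq2
    · have hnew := IH1 rfl P' Q' v' q cb hq1 hq'
      have := Cov.attachA j hnew h2 (Finset.mem_union_left _ hj1) hj2
      exact covCast this (Finset.union_right_comm _ _ _) (Finset.union_right_comm _ _ _)
        (by ring)
    · have hnew := IH2 rfl P' Q' v' q cb hq2 hq'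
      have := Cov.attachA j h1 hnew hj1 (Finset.mem_union_left _ hj2)
      exact covCast this (Finset.union_assoc _ _ _).symm (Finset.union_assoc _ _ _).symm
        (by ring)
  | attachB q0 h1 h2 hq1 hq2 IH1 IH2 => intro hb; simp at hb
  | linkb i h1 hi IH =>
    rename_i P1 Q1 v1
    intro _ P' Q' v' q cb hq hq'
    have hq1 : q ∈ Q1 := by
      rcases Finset.mem_union.mp hq with h | h
      · exact h
      · exact (Finset.mem_singleton.mp h) ▸ hi
    have hb2 := Cov.attachB q h1 cb hq1 hq'
    have := Cov.linkb i hb2 (Finset.mem_union_left _ hi)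
    exact covCast this (Finset.union_right_comm _ _ _) (Finset.union_right_comm _ _ _)
      (by ring)
  | linka i h1 hi IH => intro hb; simp at hb

/-- Merging an `a`-side structure into a `b`-rooted structure at a shared left-shadow point. -/
lemma Ma {b P Q v} (hc : Cov ε δa δb b P Q v) :
    b = false → ∀ P' Q' v' (p : Fin n), Cov ε δa δb true P' Q' v' → p ∈ P → p ∈ P' →
      Cov ε δa δb false (P ∪ P') (Q ∪ Q') (v + v') := by
  induction hc with
  | basea A => intro hb; simp at hb
  | baseb B =>
    intro _ P' Q' v' p ca hp hp'
    exact absurd hp (Finset.notMem_empty p)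
  | link i b =>
    intro _ P' Q' v' p ca hp hp'
    have hpi : p = i := Finset.mem_singleton.mp hp
    subst hpi
    exact covCast (Cov.linka p ca hp') (Finset.union_comm _ _) (Finset.union_comm _ _)
      (add_comm _ _)
  | attachA j h1 h2 hj1 hj2 IH1 IH2 => intro hb; simp at hb
  | attachB q h1 h2 hq1 hq2 IH1 IH2 =>
    rename_i P1 Q1 v1 P2 Q2 v2
    intro _ P' Q' v' p ca hp hp'
    rcases Finset.mem_union.mp hp with hp1 | hp2
    · have hnew := IH1 rfl P' Q' v' p ca hp1 hp'
      have := Cov.attachB q hnew h2 (Finset.mem_union_left _ hq1) hq2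
      exact covCast this (Finset.union_right_comm _ _ _) (Finset.union_right_comm _ _ _)
        (by ring)
    · have hnew := IH2 rfl P' Q' v' p ca hp2 hp'
      have := Cov.attachB q h1 hnew hq1 (Finset.mem_union_left _ hq2)
      exact covCast this (Finset.union_assoc _ _ _).symm (Finset.union_assoc _ _ _).symm
        (by ring)
  | linkb i h1 hi IH => intro hb; simp at hb
  | linka i h1 hi IH =>
    rename_i P1 Q1 v1
    intro _ P' Q' v' p ca hp hp'
    have hp1 : p ∈ P1 := by
      rcases Finset.mem_union.mp hp with h | h
      · exact h
      · exact (Finset.mem_singleton.mp h) ▸ hi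
    have ha2 := Cov.attachA p h1 ca hp1 hp'
    have := Cov.linka i ha2 (Finset.mem_union_left _ hi)
    exact covCast this (Finset.union_right_comm _ _ _) (Finset.union_right_comm _ _ _)
      (by ring)

/-- Re-rooting: a `b`-rooted structure whose left shadow is nonempty can be re-rooted
on the `a`-side. -/
lemma toTrueOf {b P Q v} (hc : Cov ε δa δb b P Q v) :
    b = false → ∀ j : Fin n, j ∈ P → Cov ε δa δb true P Q v := by
  induction hc with
  | basea A => intro hb; simp at hb
  | baseb B =>
    intro _ j hj
    exact absurd hj (Finset.notMem_empty j)
  | link i b => intro _ j hj; exact Cov.link i true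
  | attachA j0 h1 h2 hj1 hj2 IH1 IH2 => intro hb; simp at hb
  | attachB q h1 h2 hq1 hq2 IH1 IH2 =>
    rename_i P1 Q1 v1 P2 Q2 v2
    intro _ j hj
    rcases Finset.mem_union.mp hj with hj1 | hj2
    · exact Mb (IH1 rfl j hj1) rfl P2 Q2 v2 q h2 hq1 hq2
    · have := Mb (IH2 rfl j hj2) rfl P1 Q1 v1 q h1 hq2 hq1
      exact covCast this (Finset.union_comm _ _) (Finset.union_comm _ _) (add_comm _ _)
  | linkb i h1 hi IH => intro hb; simp at hb
  | linka i h1 hi IH =>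
    intro _ j hj
    exact Cov.attachA i h1 (Cov.link i true) hi (Finset.mem_singleton_self i)

/-- Re-rooting: an `a`-rooted structure whose right shadow is nonempty can be re-rooted
on the `b`-side. -/
lemma toFalseOf {b P Q v} (hc : Cov ε δa δb b P Q v) :
    b = true → ∀ q : Fin n, q ∈ Q → Cov ε δa δb false P Q v := by
  induction hc with
  | basea A =>
    intro _ q hq
    exact absurd hq (Finset.notMem_empty q)
  | baseb B => intro hb; simp at hb
  | link i b => intro _ q hq; exact Cov.link i false
  | attachA j h1 h2 hj1 hj2 IH1 IH2 =>
    rename_i P1 Q1 v1 P2 Q2 v2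
    intro _ q hq
    rcases Finset.mem_union.mp hq with hq1 | hq2
    · exact Ma (IH1 rfl q hq1) rfl P2 Q2 v2 j h2 hj1 hj2
    · have := Ma (IH2 rfl q hq2) rfl P1 Q1 v1 j h1 hj2 hj1
      exact covCast this (Finset.union_comm _ _) (Finset.union_comm _ _) (add_comm _ _)
  | attachB q0 h1 h2 hq1 hq2 IH1 IH2 => intro hb; simp at hb
  | linkb i h1 hi IH =>
    intro _ q hq
    exact Cov.attachB i h1 (Cov.link i false) hi (Finset.mem_singleton_self i)
  | linka i h1 hi IH => intro hb; simp at hb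

lemma toTrue {b P Q v} (hc : Cov ε δa δb b P Q v) {j : Fin n} (hj : j ∈ P) :
    Cov ε δa δb true P Q v := by
  cases b with
  | true => exact hc
  | false => exact toTrueOf hc rfl j hj

lemma toFalse {b P Q v} (hc : Cov ε δa δb b P Q v) {q : Fin n} (hq : q ∈ Q) :
    Cov ε δa δb false P Q v := by
  cases b with
  | true => exact toFalseOf hc rfl q hq
  | false => exact hc

/-- Merge two cover structures which share an actual point of the disjoint union. -/
lemma merge {b1 P1 Q1 v1 b2 P2 Q2 v2} (h1 : Cov ε δa δb b1 P1 Q1 v1)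
    (h2 : Cov ε δa δb b2 P2 Q2 v2) (x : Fin n ⊕ Fin n)
    (hx1 : x ∈ P1.image Sum.inl ∪ Q1.image Sum.inr)
    (hx2 : x ∈ P2.image Sum.inl ∪ Q2.image Sum.inr) :
    ∃ b, Cov ε δa δb b (P1 ∪ P2) (Q1 ∪ Q2) (v1 + v2) := by
  rcases x with j | q
  · have hj1 : j ∈ P1 := by
      rcases Finset.mem_union.mp hx1 with h | h
      · obtain ⟨p, hp, he⟩ := Finset.mem_image.mp h
        exact (Sum.inl.inj he) ▸ hp
      · obtain ⟨p, hp, he⟩ := Finset.mem_image.mp h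
        exact absurd he (by simp)
    have hj2 : j ∈ P2 := by
      rcases Finset.mem_union.mp hx2 with h | h
      · obtain ⟨p, hp, he⟩ := Finset.mem_image.mp h
        exact (Sum.inl.inj he) ▸ hp
      · obtain ⟨p, hp, he⟩ := Finset.mem_image.mp h
        exact absurd he (by simp)
    exact ⟨true, Cov.attachA j (toTrue h1 hj1) (toTrue h2 hj2) hj1 hj2⟩
  · have hq1 : q ∈ Q1 := by
      rcases Finset.mem_union.mp hx1 with h | h
      · obtain ⟨p, hp, he⟩ := Finset.mem_image.mp h
        exact absurd he (by simp)
      · obtain ⟨p, hp, he⟩ := Finset.mem_image.mp h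
        exact (Sum.inr.inj he) ▸ hp
    have hq2 : q ∈ Q2 := by
      rcases Finset.mem_union.mp hx2 with h | h
      · obtain ⟨p, hp, he⟩ := Finset.mem_image.mp h
        exact absurd he (by simp)
      · obtain ⟨p, hp, he⟩ := Finset.mem_image.mp h
        exact (Sum.inr.inj he) ▸ hp
    exact ⟨false, Cov.attachB q (toFalse h1 hq1) (toFalse h2 hq2) hq1 hq2⟩

lemma cover_univ : ∀ K : Finset (Fin n), ∃ v, Cov ε δa δb true Finset.univ K v := by
  intro K
  induction K using Finset.induction_on with
  | empty => exact ⟨δa Finset.univ, Cov.basea Finset.univ⟩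
  | @insert x K hx IH =>
    obtain ⟨v, hv⟩ := IH
    refine ⟨v + ε, ?_⟩
    have := Cov.attachA x hv (Cov.link x true) (Finset.mem_univ x)
      (Finset.mem_singleton_self x)
    refine covCast this ?_ ?_ rfl
    · exact Finset.union_eq_left.mpr (Finset.subset_univ _)
    · rw [Finset.union_comm, ← Finset.insert_eq]

end JointDiv

/-- Two finite enumerated diversities on `Fin n` whose values differ by at most `ε` on every
subset admit a joint embedding into a semidiversity on the disjoint union `Fin n ⊕ Fin n`
matching corresponding points to within `ε`. -/
theorem diversities_joint_embedding_within_epsilon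
    (n : ℕ) (ε : ℝ) (hε : 0 ≤ ε)
    (δa δb : Finset (Fin n) → ℝ)
    -- δa is a diversity
    (ha1 : ∀ A : Finset (Fin n), 0 ≤ δa A)
    (ha0 : ∀ A : Finset (Fin n), δa A = 0 ↔ A.card ≤ 1)
    (hatri : ∀ A B C : Finset (Fin n), B.Nonempty → δa (A ∪ C) ≤ δa (A ∪ B) + δa (B ∪ C))
    -- δb is a diversity
    (hb1 : ∀ A : Finset (Fin n), 0 ≤ δb A)
    (hb0 : ∀ A : Finset (Fin n), δb A = 0 ↔ A.card ≤ 1)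
    (hbtri : ∀ A B C : Finset (Fin n), B.Nonempty → δb (A ∪ C) ≤ δb (A ∪ B) + δb (B ∪ C))
    -- δa and δb are at sup-distance at most ε
    (hclose : ∀ A : Finset (Fin n), |δa A - δb A| ≤ ε) :
    ∃ δ : Finset (Fin n ⊕ Fin n) → ℝ,
      -- δ is a semidiversity
      (∀ E : Finset (Fin n ⊕ Fin n), 0 ≤ δ E) ∧
      (∀ E : Finset (Fin n ⊕ Fin n), E.card ≤ 1 → δ E = 0) ∧
      (∀ A B C : Finset (Fin n ⊕ Fin n), B.Nonempty →
        δ (A ∪ C) ≤ δ (A ∪ B) + δ (B ∪ C)) ∧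
      -- δ restricts to δa on the left copy and δb on the right copy
      (∀ A : Finset (Fin n), δ (A.image Sum.inl) = δa A) ∧
      (∀ A : Finset (Fin n), δ (A.image Sum.inr) = δb A) ∧
      -- corresponding points are within ε
      (∀ i : Fin n, δ {Sum.inl i, Sum.inr i} ≤ ε) := by
  classical
  have hab : ∀ T, δa T ≤ δb T + ε := by
    intro T; have h := abs_le.mp (hclose T); linarith [h.2]
  have hba : ∀ T, δb T ≤ δa T + ε := by
    intro T; have h := abs_le.mp (hclose T); linarith [h.1]
  have ha0s : ∀ i : Fin n, δa {i} = 0 := fun i => (ha0 {i}).mpr (by simp)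
  have hb0s : ∀ i : Fin n, δb {i} = 0 := fun i => (hb0 {i}).mpr (by simp)
  have hamono : ∀ {S T : Finset (Fin n)}, S ⊆ T → δa S ≤ δa T :=
    fun h => JointDiv.mono δa ha0s hatri h
  have hbmono : ∀ {S T : Finset (Fin n)}, S ⊆ T → δb S ≤ δb T :=
    fun h => JointDiv.mono δb hb0s hbtri h
  -- the set of values of connected covers of E
  set Sset : Finset (Fin n ⊕ Fin n) → Set ℝ := fun E =>
    {v | ∃ b P Q, JointDiv.Cov ε δa δb b P Q v ∧
        E ⊆ P.image Sum.inl ∪ Q.image Sum.inr} with hSset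
  have hmem : ∀ (E : Finset (Fin n ⊕ Fin n)) (v : ℝ),
      v ∈ Sset E ↔ ∃ b P Q, JointDiv.Cov ε δa δb b P Q v ∧
        E ⊆ P.image Sum.inl ∪ Q.image Sum.inr := by
    intro E v; rw [hSset]; rfl
  have hbdd : ∀ E, BddBelow (Sset E) := by
    intro E
    refine ⟨0, ?_⟩
    intro v hv
    obtain ⟨b, P, Q, hc, -⟩ := (hmem E v).mp hv
    exact JointDiv.cov_nonneg hε ha1 hb1 hc
  have hne : ∀ E, (Sset E).Nonempty := by
    intro E
    obtain ⟨v, hv⟩ := JointDiv.cover_univ (ε := ε) (δa := δa) (δb := δb) Finset.univ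
    refine ⟨v, (hmem E v).mpr ⟨true, Finset.univ, Finset.univ, hv, ?_⟩⟩
    intro x _
    rcases x with j | q
    · exact Finset.mem_union_left _ (Finset.mem_image_of_mem _ (Finset.mem_univ j))
    · exact Finset.mem_union_right _ (Finset.mem_image_of_mem _ (Finset.mem_univ q))
  set δ : Finset (Fin n ⊕ Fin n) → ℝ :=
    fun E => if E.card ≤ 1 then 0 else sInf (Sset E) with hδ
  have hδ_zero : ∀ E, E.card ≤ 1 → δ E = 0 := by
    intro E h; rw [hδ]; simp only []; rw [if_pos h]
  have hδ_eqI : ∀ E, ¬ E.card ≤ 1 → δ E = sInf (Sset E) := by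
    intro E h; rw [hδ]; simp only []; rw [if_neg h]
  have hδ_nonneg : ∀ E, 0 ≤ δ E := by
    intro E
    by_cases h : E.card ≤ 1
    · rw [hδ_zero E h]
    · rw [hδ_eqI E h]
      obtain ⟨v0, hv0⟩ := hne E
      obtain ⟨lb, hlb⟩ := hbdd E
      refine le_csInf ⟨v0, hv0⟩ ?_
      intro v hv
      obtain ⟨b, P, Q, hc, -⟩ := (hmem E v).mp hv
      exact JointDiv.cov_nonneg hε ha1 hb1 hc
  have hδ_le : ∀ E v, ¬ E.card ≤ 1 → v ∈ Sset E → δ E ≤ v := by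
    intro E v h hv
    rw [hδ_eqI E h]
    exact csInf_le (hbdd E) hv
  have hδ_mono : ∀ E E', E ⊆ E' → δ E ≤ δ E' := by
    intro E E' hEE
    by_cases h1 : E.card ≤ 1
    · rw [hδ_zero E h1]; exact hδ_nonneg E'
    · have h2 : ¬ E'.card ≤ 1 := fun hc => h1 (le_trans (Finset.card_le_card hEE) hc)
      rw [hδ_eqI E h1, hδ_eqI E' h2]
      refine csInf_le_csInf (hbdd E) (hne E') ?_
      intro v hv
      obtain ⟨b, P, Q, hc, hcov⟩ := (hmem E' v).mp hv
      exact (hmem E v).mpr ⟨b, P, Q, hc, hEE.trans hcov⟩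
  refine ⟨δ, hδ_nonneg, hδ_zero, ?_, ?_, ?_, ?_⟩
  · -- triangle inequality
    intro A B C hB
    by_cases hAC : (A ∪ C).card ≤ 1
    · rw [hδ_zero _ hAC]
      exact add_nonneg (hδ_nonneg _) (hδ_nonneg _)
    by_cases hAB : (A ∪ B).card ≤ 1
    · have hBe : B = A ∪ B :=
        Finset.eq_of_subset_of_card_le Finset.subset_union_right
          (le_trans hAB (Finset.card_pos.mpr hB))
      have hsub : A ∪ C ⊆ B ∪ C := by
        refine Finset.union_subset_union ?_ (subset_refl C)
        intro a ha
        have : a ∈ A ∪ B := Finset.mem_union_left _ ha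
        rwa [← hBe] at this
      have := hδ_mono _ _ hsub
      rw [hδ_zero _ hAB]
      linarith
    by_cases hBC : (B ∪ C).card ≤ 1
    · have hBe : B = B ∪ C :=
        Finset.eq_of_subset_of_card_le Finset.subset_union_left
          (le_trans hBC (Finset.card_pos.mpr hB))
      have hsub : A ∪ C ⊆ A ∪ B := by
        refine Finset.union_subset_union (subset_refl A) ?_
        intro c hc
        have : c ∈ B ∪ C := Finset.mem_union_right _ hc
        rwa [← hBe] at this
      have := hδ_mono _ _ hsub
      rw [hδ_zero _ hBC]
      linarith
    -- main case
    obtain ⟨x, hxB⟩ := hB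
    have key : ∀ v1 ∈ Sset (A ∪ B), ∀ v2 ∈ Sset (B ∪ C), δ (A ∪ C) ≤ v1 + v2 := by
      intro v1 hv1 v2 hv2
      obtain ⟨b1, P1, Q1, h1, hcov1⟩ := (hmem _ v1).mp hv1
      obtain ⟨b2, P2, Q2, h2, hcov2⟩ := (hmem _ v2).mp hv2
      obtain ⟨b, hc⟩ := JointDiv.merge h1 h2 x
        (hcov1 (Finset.mem_union_right A hxB)) (hcov2 (Finset.mem_union_left C hxB))
      refine hδ_le _ _ hAC ((hmem _ _).mpr ⟨b, P1 ∪ P2, Q1 ∪ Q2, hc, ?_⟩)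
      intro y hy
      have hsub : (P1.image Sum.inl ∪ Q1.image Sum.inr) ∪
          (P2.image Sum.inl ∪ Q2.image Sum.inr) ⊆
          (P1 ∪ P2).image Sum.inl ∪ (Q1 ∪ Q2).image Sum.inr := by
        rw [Finset.image_union, Finset.image_union]
        intro z hz
        simp only [Finset.mem_union] at hz ⊢
        tauto
      rcases Finset.mem_union.mp hy with h | h
      · exact hsub (Finset.mem_union_left _ (hcov1 (Finset.mem_union_left _ h)))
      · exact hsub (Finset.mem_union_right _ (hcov2 (Finset.mem_union_right _ h)))
    have H2 : ∀ v2 ∈ Sset (B ∪ C), δ (A ∪ C) - v2 ≤ δ (A ∪ B) := by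
      intro v2 hv2
      rw [hδ_eqI _ hAB]
      refine le_csInf (hne _) ?_
      intro v1 hv1
      linarith [key v1 hv1 v2 hv2]
    have H3 : δ (A ∪ C) - δ (A ∪ B) ≤ δ (B ∪ C) := by
      rw [hδ_eqI _ hBC]
      refine le_csInf (hne _) ?_
      intro v2 hv2
      linarith [H2 v2 hv2]
    linarith
  · -- restriction to the left copy
    intro A
    have hcard : (A.image (Sum.inl : Fin n → Fin n ⊕ Fin n)).card = A.card :=
      Finset.card_image_of_injective _ Sum.inl_injective
    by_cases h1 : A.card ≤ 1
    · rw [hδ_zero _ (by rw [hcard]; exact h1)]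
      exact ((ha0 A).mpr h1).symm
    · have hne1 : ¬ (A.image (Sum.inl : Fin n → Fin n ⊕ Fin n)).card ≤ 1 := by rw [hcard]; exact h1
      refine le_antisymm ?_ ?_
      · refine hδ_le _ _ hne1 ((hmem _ _).mpr ⟨true, A, ∅, JointDiv.Cov.basea A, ?_⟩)
        intro y hy
        exact Finset.mem_union_left _ hy
      · rw [hδ_eqI _ hne1]
        refine le_csInf (hne _) ?_
        intro v hv
        obtain ⟨b, P, Q, hc, hcov⟩ := (hmem _ v).mp hv
        have hAP : A ⊆ P := by
          intro a ha
          have hm := hcov (Finset.mem_image_of_mem _ ha)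
          rcases Finset.mem_union.mp hm with h | h
          · obtain ⟨p, hp, he⟩ := Finset.mem_image.mp h
            exact (Sum.inl.inj he) ▸ hp
          · obtain ⟨q, hq, he⟩ := Finset.mem_image.mp h
            exact absurd he (by simp)
        have hA : A.Nonempty := Finset.card_pos.mp (by omega)
        obtain ⟨j, hj⟩ := hA
        have hctrue := JointDiv.toTrue hc (hAP hj)
        have hb := (JointDiv.cov_bound hε ha0s hb0s hatri hbtri hab hba hctrue).1 rfl
        exact le_trans (hamono (hAP.trans Finset.subset_union_left)) hb
  · -- restriction to the right copy
    intro A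
    have hcard : (A.image (Sum.inr : Fin n → Fin n ⊕ Fin n)).card = A.card :=
      Finset.card_image_of_injective _ Sum.inr_injective
    by_cases h1 : A.card ≤ 1
    · rw [hδ_zero _ (by rw [hcard]; exact h1)]
      exact ((hb0 A).mpr h1).symm
    · have hne1 : ¬ (A.image (Sum.inr : Fin n → Fin n ⊕ Fin n)).card ≤ 1 := by rw [hcard]; exact h1
      refine le_antisymm ?_ ?_
      · refine hδ_le _ _ hne1 ((hmem _ _).mpr ⟨false, ∅, A, JointDiv.Cov.baseb A, ?_⟩)
        intro y hy
        exact Finset.mem_union_right _ hy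
      · rw [hδ_eqI _ hne1]
        refine le_csInf (hne _) ?_
        intro v hv
        obtain ⟨b, P, Q, hc, hcov⟩ := (hmem _ v).mp hv
        have hAQ : A ⊆ Q := by
          intro a ha
          have hm := hcov (Finset.mem_image_of_mem _ ha)
          rcases Finset.mem_union.mp hm with h | h
          · obtain ⟨p, hp, he⟩ := Finset.mem_image.mp h
            exact absurd he (by simp)
          · obtain ⟨q, hq, he⟩ := Finset.mem_image.mp h
            exact (Sum.inr.inj he) ▸ hq
        have hA : A.Nonempty := Finset.card_pos.mp (by omega)
        obtain ⟨j, hj⟩ := hA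
        have hcfalse := JointDiv.toFalse hc (hAQ hj)
        have hb := (JointDiv.cov_bound hε ha0s hb0s hatri hbtri hab hba hcfalse).2 rfl
        exact le_trans (hbmono (hAQ.trans Finset.subset_union_right)) hb
  · -- corresponding points
    intro i
    have hcard : ¬ ({Sum.inl i, Sum.inr i} : Finset (Fin n ⊕ Fin n)).card ≤ 1 := by
      rw [Finset.card_pair (by simp)]
      omega
    refine hδ_le _ _ hcard ((hmem _ _).mpr
      ⟨true, {i}, {i}, JointDiv.Cov.link i true, ?_⟩)
    intro y hy
    simp only [Finset.mem_insert, Finset.mem_singleton] at hy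
    rcases hy with rfl | rfl
    · exact Finset.mem_union_left _ (by simp)
    · exact Finset.mem_union_right _ (by simp)
end

section
/- Let (Ω, 𝒜, μ) be a measure space and suppose f_a, f_b, f_c, f_e, f_{z₁}, g_a, g_b, g_c, g_e, g_{z₂} are elements of L1(μ) such that: ‖f_x − f_y‖ equals the specified B-distances (d(a,b)=d(a,c)=d(a,e)=d(b,c)=d(b,e)=2, d(c,e)=1, d(x,z₁)=1 for x ∈ {a,b,c,e}), ‖g_x − g_y‖ equals the specified C-distances (same distances among a,b,c,e, with d(a,z₂)=d(b,z₂)=d(c,z₂)=1 and d(e,z₂)=2), and ‖f_x − g_x‖ ≤ ε for each x ∈ {a, b, c, e}. Then ε ≥ 1/4. Consequently, the class of finite L1-embeddable metric spaces does not satisfy the near amalgamation property: the two five-point L1 metrics B and C, which agree on {a, b, c, e}, admit no common L1 embedding matching their shared points to within any ε < 1/4. -/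
open MeasureTheory

private lemma pent_aux (u v p q r : ℝ) (hpq : p ≤ q) (hqr : q ≤ r) :
    |u - v| + |p - q| + |p - r| + |q - r| ≤
      |u - p| + |u - q| + |u - r| + |v - p| + |v - q| + |v - r| := by
  have h1 : |u - v| ≤ |u - q| + |q - v| := abs_sub_le u q v
  have h2 : |q - v| = |v - q| := abs_sub_comm q v
  have h3 : |p - q| = q - p := by rw [abs_sub_comm, abs_of_nonneg (by linarith)]
  have h4 : |p - r| = r - p := by rw [abs_sub_comm, abs_of_nonneg (by linarith)]
  have h5 : |q - r| = r - q := by rw [abs_sub_comm, abs_of_nonneg (by linarith)]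
  have h6 : u - p ≤ |u - p| := le_abs_self _
  have h7 : r - u ≤ |u - r| := (le_abs_self _).trans_eq (abs_sub_comm r u)
  have h8 : v - p ≤ |v - p| := le_abs_self _
  have h9 : r - v ≤ |v - r| := (le_abs_self _).trans_eq (abs_sub_comm r v)
  linarith

private lemma pent_real (u v p q r : ℝ) :
    |u - v| + |p - q| + |p - r| + |q - r| ≤
      |u - p| + |u - q| + |u - r| + |v - p| + |v - q| + |v - r| := by
  have cpq := abs_sub_comm p q
  have cpr := abs_sub_comm p r
  have cqr := abs_sub_comm q r
  rcases le_total p q with h1 | h1 <;> rcases le_total q r with h2 | h2 <;>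
    rcases le_total p r with h3 | h3
  · linarith [pent_aux u v p q r h1 h2]
  · linarith [pent_aux u v p q r h1 h2]
  · linarith [pent_aux u v p r q h3 h2]
  · linarith [pent_aux u v r p q h3 h1]
  · linarith [pent_aux u v q p r h1 h3]
  · linarith [pent_aux u v q r p h2 h3]
  · linarith [pent_aux u v r q p h2 h1]
  · linarith [pent_aux u v r q p h2 h1]

private lemma pent_L1 {Ω : Type*} [MeasurableSpace Ω] {μ : Measure Ω}
    (u v p q r : Lp ℝ 1 μ) :
    dist u v + dist p q + dist p r + dist q r ≤
      dist u p + dist u q + dist u r + dist v p + dist v q + dist v r := by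
  have key : ∀ f g : Lp ℝ 1 μ, Integrable (fun a => dist (f a) (g a)) μ := by
    intro f g
    simp_rw [dist_eq_norm]
    exact ((L1.integrable_coeFn f).sub (L1.integrable_coeFn g)).norm
  have main : ∫ a, (dist (u a) (v a) + dist (p a) (q a) + dist (p a) (r a) + dist (q a) (r a)) ∂μ
      ≤ ∫ a, (dist (u a) (p a) + dist (u a) (q a) + dist (u a) (r a) + dist (v a) (p a)
        + dist (v a) (q a) + dist (v a) (r a)) ∂μ := by
    apply integral_mono
    · exact (((key u v).add (key p q)).add (key p r)).add (key q r)
    · exact (((((key u p).add (key u q)).add (key u r)).add (key v p)).add (key v q)).add (key v r)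
    intro a
    simp only [Real.dist_eq]
    exact pent_real (u a) (v a) (p a) (q a) (r a)
  have kL3 : Integrable (fun a => dist (u a) (v a) + dist (p a) (q a) + dist (p a) (r a)) μ :=
    ((key u v).add (key p q)).add (key p r)
  have kL2 : Integrable (fun a => dist (u a) (v a) + dist (p a) (q a)) μ :=
    (key u v).add (key p q)
  have kR5 : Integrable (fun a => dist (u a) (p a) + dist (u a) (q a) + dist (u a) (r a)
      + dist (v a) (p a) + dist (v a) (q a)) μ :=
    ((((key u p).add (key u q)).add (key u r)).add (key v p)).add (key v q)
  have kR4 : Integrable (fun a => dist (u a) (p a) + dist (u a) (q a) + dist (u a) (r a)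
      + dist (v a) (p a)) μ :=
    (((key u p).add (key u q)).add (key u r)).add (key v p)
  have kR3 : Integrable (fun a => dist (u a) (p a) + dist (u a) (q a) + dist (u a) (r a)) μ :=
    ((key u p).add (key u q)).add (key u r)
  have kR2 : Integrable (fun a => dist (u a) (p a) + dist (u a) (q a)) μ :=
    (key u p).add (key u q)
  rw [integral_add kL3 (key q r), integral_add kL2 (key p r), integral_add (key u v) (key p q),
    integral_add kR5 (key v r), integral_add kR4 (key v q), integral_add kR3 (key v p),
    integral_add kR2 (key u r), integral_add (key u p) (key u q)] at main
  simp_rw [L1.dist_eq_integral_dist]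
  exact main

/-- No near-amalgamation of the two five-point `L₁` metrics `B` and `C`: if elements
`fₐ, f_b, f_c, fₑ, f_{z₁}` and `gₐ, g_b, g_c, gₑ, g_{z₂}` of `L₁(μ)` realize the
`B`-distances and `C`-distances respectively, and `‖f_x − g_x‖ ≤ ε` for `x ∈ {a,b,c,e}`,
then `ε ≥ 1/4`. -/
theorem L1_metrics_no_near_amalgamation
    {Ω : Type*} [MeasurableSpace Ω] (μ : Measure Ω)
    (fa fb fc fe fz1 ga gb gc ge gz2 : Lp ℝ 1 μ) (ε : ℝ)
    -- f realizes the B-distances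
    (hfab : ‖fa - fb‖ = 2) (hfac : ‖fa - fc‖ = 2) (hfae : ‖fa - fe‖ = 2)
    (hfbc : ‖fb - fc‖ = 2) (hfbe : ‖fb - fe‖ = 2) (hfce : ‖fc - fe‖ = 1)
    (hfaz : ‖fa - fz1‖ = 1) (hfbz : ‖fb - fz1‖ = 1)
    (hfcz : ‖fc - fz1‖ = 1) (hfez : ‖fe - fz1‖ = 1)
    -- g realizes the C-distances
    (hgab : ‖ga - gb‖ = 2) (hgac : ‖ga - gc‖ = 2) (hgae : ‖ga - ge‖ = 2)
    (hgbc : ‖gb - gc‖ = 2) (hgbe : ‖gb - ge‖ = 2) (hgce : ‖gc - ge‖ = 1)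
    (hgaz : ‖ga - gz2‖ = 1) (hgbz : ‖gb - gz2‖ = 1)
    (hgcz : ‖gc - gz2‖ = 1) (hgez : ‖ge - gz2‖ = 2)
    -- the shared points match to within ε
    (hfga : ‖fa - ga‖ ≤ ε) (hfgb : ‖fb - gb‖ ≤ ε)
    (hfgc : ‖fc - gc‖ ≤ ε) (hfge : ‖fe - ge‖ ≤ ε) :
    1 / 4 ≤ ε := by
  simp only [← dist_eq_norm] at *
  have pent := pent_L1 fz1 gz2 fa fb fc
  -- bound dist gz2 fa etc.
  have h1 : dist gz2 fa ≤ 1 + ε := by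
    calc dist gz2 fa ≤ dist gz2 ga + dist ga fa := dist_triangle _ _ _
    _ ≤ 1 + ε := by rw [dist_comm gz2 ga, dist_comm ga fa]; linarith
  have h2 : dist gz2 fb ≤ 1 + ε := by
    calc dist gz2 fb ≤ dist gz2 gb + dist gb fb := dist_triangle _ _ _
    _ ≤ 1 + ε := by rw [dist_comm gz2 gb, dist_comm gb fb]; linarith
  have h3 : dist gz2 fc ≤ 1 + ε := by
    calc dist gz2 fc ≤ dist gz2 gc + dist gc fc := dist_triangle _ _ _
    _ ≤ 1 + ε := by rw [dist_comm gz2 gc, dist_comm gc fc]; linarith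
  have hz : dist fz1 gz2 ≤ 3 * ε := by
    have e1 : dist fz1 fa = 1 := by rw [dist_comm]; exact hfaz
    have e2 : dist fz1 fb = 1 := by rw [dist_comm]; exact hfbz
    have e3 : dist fz1 fc = 1 := by rw [dist_comm]; exact hfcz
    linarith
  have final : dist ge gz2 ≤ dist ge fe + dist fe fz1 + dist fz1 gz2 :=
    dist_triangle4 _ _ _ _
  rw [dist_comm ge fe] at final
  linarith
end
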